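/- Under the standard and dual assumptions with (X,γ) a Mazur space, if G ⊆ X is σ(X,X^∘)-(T(t))-equicontinuous (i.e., for each x^∘ ∈ X^∘ the family of functions t ↦ ⟨x^∘, T(t)g⟩, g ∈ G, is equicontinuous at t = 0), then the σ(X,X^∘)-closure and the σ(X,X^•)-closure of G coincide; in particular, σ(X,X^∘)-closed equicontinuous sets are σ(X,X^•)-closed, and the relative σ(X,X^∘)- and σ(X,X^•)-topologies coincide on such G. -/

import Mathlib

noncomputable section

open Filter Topology MeasureTheory

/-- The norm dual `X' = X →L[ℂ] ℂ` of `X` (with the operator norm); the topology on `X`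
here is the norm topology, irrespective of any other topology in scope. -/
abbrev wDual (X : Type*) [NormedAddCommGroup X] [NormedSpace ℂ X] : Type _ := X →L[ℂ] ℂ

/-- The space `L(X)` of bounded operators on `X` (with respect to the norm). -/
abbrev bOp (X : Type*) [NormedAddCommGroup X] [NormedSpace ℂ X] : Type _ := X →L[ℂ] X


/-- Composition `f ∘ R` of a functional with an operator (the dual action). -/
abbrev dualComp {X : Type*} [NormedAddCommGroup X] [NormedSpace ℂ X]
    (f : wDual X) (R : bOp X) : wDual X := ContinuousLinearMap.comp f R

/-- Composition of bounded operators. -/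
abbrev opComp {X : Type*} [NormedAddCommGroup X] [NormedSpace ℂ X]
    (R S : bOp X) : bOp X := ContinuousLinearMap.comp R S

/-- A sequence is Cauchy with respect to a given (group) topology `t`. -/
def SeqCauchyIn {X : Type*} [AddCommGroup X] (t : TopologicalSpace X) (u : ℕ → X) : Prop :=
  ∀ U ∈ @nhds X t 0, ∃ N : ℕ, ∀ m ≥ N, ∀ n ≥ N, u m - u n ∈ U

/-- The standard assumptions on a triple `(X, ‖·‖, τ)`: `τ` is a coarser Hausdorff locally
convex vector topology, sequentially complete on norm-bounded sets, and the `τ`-dual is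
norming for `X`. -/
structure StdAssumptions (X : Type*) [NormedAddCommGroup X] [NormedSpace ℂ X]
    (τ : TopologicalSpace X) : Prop where
  coarser : (UniformSpace.toTopologicalSpace : TopologicalSpace X) ≤ τ
  t2 : @T2Space X τ
  addGroup : @IsTopologicalAddGroup X τ _
  contSMul : @ContinuousSMul ℂ X _ _ τ
  locallyConvex : @LocallyConvexSpace ℝ X _ _ _ _ τ
  seqComplete : ∀ u : ℕ → X, (∃ C, ∀ n, ‖u n‖ ≤ C) → SeqCauchyIn τ u →
    ∃ l : X, Filter.Tendsto u Filter.atTop (@nhds X τ l)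
  norming : ∀ x : X,
    IsLUB {r : ℝ | ∃ f : wDual X, @Continuous X ℂ τ _ ⇑f ∧ ‖f‖ ≤ 1 ∧ r = ‖f x‖} ‖x‖

/-- `γ` is the mixed topology `γ(‖·‖, τ)`: the finest linear topology agreeing with `τ` on
norm-bounded sets and lying between `τ` and the norm topology. -/
structure IsMixedTopology (X : Type*) [NormedAddCommGroup X] [NormedSpace ℂ X]
    (τ γ : TopologicalSpace X) : Prop where
  le_tau : γ ≤ τ
  norm_le : (UniformSpace.toTopologicalSpace : TopologicalSpace X) ≤ γ
  addGroup : @IsTopologicalAddGroup X γ _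
  contSMul : @ContinuousSMul ℂ X _ _ γ
  agrees : ∀ B : Set X, Bornology.IsBounded B →
    TopologicalSpace.induced ((↑) : B → X) γ = TopologicalSpace.induced ((↑) : B → X) τ
  finest : ∀ γ' : TopologicalSpace X, @IsTopologicalAddGroup X γ' _ →
    @ContinuousSMul ℂ X _ _ γ' →
    (UniformSpace.toTopologicalSpace : TopologicalSpace X) ≤ γ' → γ' ≤ τ →
    (∀ B : Set X, Bornology.IsBounded B →
      TopologicalSpace.induced ((↑) : B → X) γ' = TopologicalSpace.induced ((↑) : B → X) τ) →
    γ ≤ γ'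

/-- A topology `t` on `X` makes `X` a Mazur space if every `t`-sequentially continuous linear
functional is `t`-continuous. -/
def MazurIn (X : Type*) [NormedAddCommGroup X] [NormedSpace ℂ X]
    (t : TopologicalSpace X) : Prop :=
  ∀ f : X →ₗ[ℂ] ℂ,
    (∀ (u : ℕ → X) (x : X), Filter.Tendsto u Filter.atTop (@nhds X t x) →
      Filter.Tendsto (fun n => f (u n)) Filter.atTop (nhds (f x))) →
    @Continuous X ℂ t _ ⇑f

/-- A `τ`-bi-continuous semigroup on `X`. -/
structure BiContinuousSemigroup (X : Type*) [NormedAddCommGroup X] [NormedSpace ℂ X]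
    (τ : TopologicalSpace X) where
  T : ℝ → bOp X
  map_zero : T 0 = 1
  map_add : ∀ s ≥ (0:ℝ), ∀ t ≥ (0:ℝ), T (s + t) = opComp (T s) (T t)
  strongCont : ∀ x : X, @ContinuousOn ℝ X _ τ (fun t => T t x) (Set.Ici 0)
  expBounded : ∃ M ≥ (1:ℝ), ∃ ω : ℝ, ∀ t ≥ (0:ℝ), ‖T t‖ ≤ M * Real.exp (ω * t)
  biEquicont : ∀ (u : ℕ → X) (x : X), (∃ C, ∀ n, ‖u n‖ ≤ C) →
    Filter.Tendsto u Filter.atTop (@nhds X τ x) →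
    ∀ b ≥ (0:ℝ), ∀ U ∈ @nhds X τ (0:X), ∀ᶠ n in Filter.atTop,
      ∀ t ∈ Set.Icc (0:ℝ) b, T t (u n - x) ∈ U

/-- `X^∘`: the space of norm-continuous functionals that are `τ`-sequentially continuous on
norm-bounded sets. -/
def circDual (X : Type*) [NormedAddCommGroup X] [NormedSpace ℂ X]
    (τ : TopologicalSpace X) : Set (wDual X) :=
  {f | ∀ (u : ℕ → X) (x : X), (∃ C, ∀ n, ‖u n‖ ≤ C) →
    Filter.Tendsto u Filter.atTop (@nhds X τ x) →
    Filter.Tendsto (fun n => f (u n)) Filter.atTop (nhds (f x))}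

/-- The dual assumptions: `X^∘ ∩ B_{X'}` is sequentially `σ(X^∘,X)`-complete, and every
norm-bounded `σ(X^∘,X)`-null sequence in `X^∘` is `τ`-equicontinuous on norm-bounded sets. -/
structure DualAssumptions (X : Type*) [NormedAddCommGroup X] [NormedSpace ℂ X]
    (τ : TopologicalSpace X) : Prop where
  ballSeqComplete : ∀ u : ℕ → wDual X, (∀ n, u n ∈ circDual X τ) →
    (∀ n, ‖u n‖ ≤ 1) → (∀ x : X, CauchySeq fun n => u n x) →
    ∃ f ∈ circDual X τ, ‖f‖ ≤ 1 ∧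
      ∀ x : X, Filter.Tendsto (fun n => u n x) Filter.atTop (nhds (f x))
  equicont : ∀ u : ℕ → wDual X, (∀ n, u n ∈ circDual X τ) →
    (∃ C, ∀ n, ‖u n‖ ≤ C) →
    (∀ x : X, Filter.Tendsto (fun n => u n x) Filter.atTop (nhds 0)) →
    ∀ B : Set X, Bornology.IsBounded B → ∀ x₀ ∈ B, ∀ ε > 0,
      ∃ U ∈ @nhds X τ x₀, ∀ n, ∀ x ∈ B ∩ U, ‖u n x - u n x₀‖ < ε

/-- The bi-sun dual `X^•`: the part of `X^∘` on which the dual semigroup is norm-strongly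
continuous. -/
def sunDual {X : Type*} [NormedAddCommGroup X] [NormedSpace ℂ X] {τ : TopologicalSpace X}
    (S : BiContinuousSemigroup X τ) : Set (wDual X) :=
  {f | f ∈ circDual X τ ∧
    Filter.Tendsto (fun t : ℝ => dualComp f (S.T t))
      (nhdsWithin 0 (Set.Ioi 0)) (nhds f)}

/-- The subspace of norm-strong continuity of the semigroup. -/
def contSubspace {X : Type*} [NormedAddCommGroup X] [NormedSpace ℂ X] {τ : TopologicalSpace X}
    (S : BiContinuousSemigroup X τ) : Set X :=
  {x | Filter.Tendsto (fun t : ℝ => S.T t x) (nhdsWithin 0 (Set.Ioi 0)) (nhds x)}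

/-- The norm `‖x‖^• = sup { |⟨x^•, x⟩| : x^• ∈ X^•, ‖x^•‖ ≤ 1 }`. -/
def bulletNorm {X : Type*} [NormedAddCommGroup X] [NormedSpace ℂ X] {τ : TopologicalSpace X}
    (S : BiContinuousSemigroup X τ) (x : X) : ℝ :=
  sSup {r : ℝ | ∃ f ∈ sunDual S, ‖f‖ ≤ 1 ∧ r = ‖f x‖}

/-- The weak topology `σ(X, F)` on `X` induced by a set `F` of functionals. -/
def weakTop {X : Type*} [NormedAddCommGroup X] [NormedSpace ℂ X]
    (F : Set (wDual X)) : TopologicalSpace X :=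
  ⨅ f ∈ F, TopologicalSpace.induced (⇑f) inferInstance

/-- `(D, A)` is the generator of the `τ`-bi-continuous semigroup `S`. -/
def IsBiGenerator {X : Type*} [NormedAddCommGroup X] [NormedSpace ℂ X] {τ : TopologicalSpace X}
    (S : BiContinuousSemigroup X τ) (D : Set X) (A : X → X) : Prop :=
  (∀ x : X, x ∈ D ↔
    ((∃ y : X, Filter.Tendsto (fun t : ℝ => t⁻¹ • (S.T t x - x))
        (nhdsWithin 0 (Set.Ioi 0)) (@nhds X τ y)) ∧
      ∃ C : ℝ, ∀ t ∈ Set.Ioc (0:ℝ) 1, ‖S.T t x - x‖ ≤ C * t)) ∧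
  ∀ x ∈ D, Filter.Tendsto (fun t : ℝ => t⁻¹ • (S.T t x - x))
    (nhdsWithin 0 (Set.Ioi 0)) (@nhds X τ (A x))

/-- `l` lies in the resolvent set of `(D, A)` with resolvent operator `R = R(l, A)`. -/
def IsResolvent {X : Type*} [NormedAddCommGroup X] [NormedSpace ℂ X]
    (D : Set X) (A : X → X) (l : ℂ) (R : bOp X) : Prop :=
  (∀ x : X, R x ∈ D ∧ l • R x - A (R x) = x) ∧ ∀ x ∈ D, R (l • x - A x) = x

/-- `(Db, Ab)` is the generator of the strongly continuous semigroup `T^•` on `X^•`. -/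
def IsSunGenerator {X : Type*} [NormedAddCommGroup X] [NormedSpace ℂ X] {τ : TopologicalSpace X}
    (S : BiContinuousSemigroup X τ) (Db : Set (wDual X))
    (Ab : wDual X → wDual X) : Prop :=
  (∀ f : wDual X, f ∈ Db ↔ (f ∈ sunDual S ∧ ∃ g ∈ sunDual S,
    Filter.Tendsto (fun t : ℝ => t⁻¹ • (dualComp f (S.T t) - f))
      (nhdsWithin 0 (Set.Ioi 0)) (nhds g))) ∧
  ∀ f ∈ Db, Ab f ∈ sunDual S ∧
    Filter.Tendsto (fun t : ℝ => t⁻¹ • (dualComp f (S.T t) - f))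
      (nhdsWithin 0 (Set.Ioi 0)) (nhds (Ab f))

/-- The set `G_t` of Cesàro means `(1/t) ∫_0^t T(s) g ds`, `g ∈ G` (a Pettis integral,
characterized by pairing with all functionals in `X^∘`); `G_0 := G`. -/
def cesaroSet {X : Type*} [NormedAddCommGroup X] [NormedSpace ℂ X] {τ : TopologicalSpace X}
    (S : BiContinuousSemigroup X τ) (G : Set X) (t : ℝ) : Set X :=
  if t = 0 then G else
    {y | ∃ g ∈ G, ∀ f ∈ circDual X τ, f y = (t : ℂ)⁻¹ * ∫ s in (0:ℝ)..t, f (S.T s g)}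

/-- The Favard space of the semigroup: `{x : limsup_{t→0⁺} (1/t)‖T(t)x − x‖ < ∞}`. -/
def Favard {X : Type*} [NormedAddCommGroup X] [NormedSpace ℂ X] {τ : TopologicalSpace X}
    (S : BiContinuousSemigroup X τ) : Set X :=
  {x | ∃ C : ℝ, ∀ᶠ t in nhdsWithin (0:ℝ) (Set.Ioi 0), ‖S.T t x - x‖ ≤ C * t}

/-- `φ` is a bounded linear functional on the set `F` of functionals (viewed as an element
of the dual of the subspace `F`). -/
def BoundedLinearOn {X : Type*} [NormedAddCommGroup X] [NormedSpace ℂ X]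
    (F : Set (wDual X)) (φ : wDual X → ℂ) : Prop :=
  (∀ f ∈ F, ∀ g ∈ F, φ (f + g) = φ f + φ g) ∧
  (∀ (c : ℂ), ∀ f ∈ F, φ (c • f) = c * φ f) ∧
  ∃ C : ℝ, ∀ f ∈ F, ‖φ f‖ ≤ C * ‖f‖

/-- The growth bound `ω₀` of an (exponentially bounded) semigroup, as an extended real. -/
def growthBound {X : Type*} [NormedAddCommGroup X] [NormedSpace ℂ X]
    (T : ℝ → bOp X) : EReal :=
  sInf ((fun ω : ℝ => (ω : EReal)) ''
    {ω : ℝ | ∃ M ≥ (1:ℝ), ∀ t ≥ (0:ℝ), ‖T t‖ ≤ M * Real.exp (ω * t)})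


/-! For `f ∈ X^∘` and `t > 0` the Cesàro mean `f_t = (1/t) ∫₀ᵗ f ∘ T(s) ds` lies in `X^•`: shifting
it along the dual semigroup for time `r` only changes it by two integrals over intervals of
length `r`, so `‖f_t ∘ T(r) - f_t‖ = O(r / t)`. Equicontinuity of `G`, together with continuity of
the single orbit `s ↦ f (T(s) x)`, makes `f_t` approximate `f` uniformly on `G ∪ {x}` as `t → 0`.
Hence a `σ(X, X^•)`-adherent point `x` of `G` is also `σ(X, X^∘)`-adherent, by a three-`ε`
argument; the reverse inclusion holds because `X^• ⊆ X^∘`. Since subsets of `G` are again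
equicontinuous, the two topologies have the same closure operator on `G`. -/

section WeakTopology

variable {X : Type*} [NormedAddCommGroup X] [NormedSpace ℂ X]

lemma weakTop_anti {F F' : Set (wDual X)} (h : F ⊆ F') : weakTop F' ≤ weakTop F :=
  biInf_mono h

lemma tendsto_nhds_weakTop_iff {α : Type*} {l : Filter α} {φ : α → X} {F : Set (wDual X)}
    {x : X} :
    Tendsto φ l (@nhds X (weakTop F) x) ↔ ∀ f ∈ F, Tendsto (fun a => f (φ a)) l (𝓝 (f x)) := by
  rw [weakTop]
  simp only [nhds_iInf, nhds_induced, tendsto_iInf, tendsto_comap_iff]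
  rfl

lemma closure_weakTop_subset_of_forall_exists_norm_sub_lt {F F' : Set (wDual X)} {G : Set X}
    (h : ∀ x, ∀ f ∈ F, ∀ ε > (0:ℝ), ∃ f' ∈ F', ∀ y ∈ insert x G, ‖f y - f' y‖ < ε) :
    closure[weakTop F'] G ⊆ closure[weakTop F] G := by
  intro x hx
  rw [@mem_closure_iff_clusterPt X (weakTop F')] at hx
  rw [@mem_closure_iff_clusterPt X (weakTop F)]
  refine Filter.NeBot.mono hx
    (le_inf (tendsto_id'.1 (tendsto_nhds_weakTop_iff.2 fun f hf => ?_)) inf_le_right)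
  refine Metric.tendsto_nhds.2 fun ε hε => ?_
  obtain ⟨f', hf', happrox⟩ := h x f hf (ε / 3) (by positivity)
  have hf'lim : Tendsto f' (@nhds X (weakTop F') x ⊓ 𝓟 G) (𝓝 (f' x)) :=
    (tendsto_nhds_weakTop_iff.1 tendsto_id f' hf').mono_left inf_le_left
  filter_upwards [Metric.tendsto_nhds.1 hf'lim (ε / 3) (by positivity),
    mem_inf_of_right (mem_principal_self G)] with y hy hyG
  have hy' := happrox y (Set.mem_insert_of_mem x hyG)
  have hx' := happrox x (Set.mem_insert x G)
  rw [← dist_eq_norm] at hy' hx'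
  calc dist (f y) (f x) ≤ dist (f y) (f' y) + dist (f' y) (f' x) + dist (f' x) (f x) :=
        dist_triangle4 _ _ _ _
    _ < ε := by rw [dist_comm (f' x)]; linarith

end WeakTopology

lemma induced_subtype_val_eq_of_closure_eq {Y : Type*} {t₁ t₂ : TopologicalSpace Y} {G : Set Y}
    (h : ∀ C ⊆ G, closure[t₁] C = closure[t₂] C) :
    TopologicalSpace.induced ((↑) : G → Y) t₁ = TopologicalSpace.induced ((↑) : G → Y) t₂ :=
  TopologicalSpace.ext_isClosed fun V => by
    rw [@isClosed_induced_iff' _ _ t₁, @isClosed_induced_iff' _ _ t₂,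
      h _ (Subtype.coe_image_subset G V)]

lemma tendsto_apply_of_mem_circDual {X : Type*} [NormedAddCommGroup X] [NormedSpace ℂ X]
    {τ : TopologicalSpace X} {f : wDual X} (hf : f ∈ circDual X τ) {u : ℕ → X} {x : X} {C : ℝ}
    (hbdd : ∀ᶠ n in atTop, ‖u n‖ ≤ C) (hu : Tendsto u atTop (@nhds X τ x)) :
    Tendsto (fun n => f (u n)) atTop (𝓝 (f x)) := by
  obtain ⟨N, hN⟩ := eventually_atTop.1 hbdd
  exact (tendsto_add_atTop_iff_nat N).1 <| hf (fun n => u (n + N)) x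
    ⟨C, fun n => hN _ (Nat.le_add_left N n)⟩ (hu.comp (tendsto_add_atTop_nat N))

namespace BiContinuousSemigroup

variable {X : Type*} [NormedAddCommGroup X] [NormedSpace ℂ X] {τ : TopologicalSpace X}
  (S : BiContinuousSemigroup X τ) {f : wDual X}

lemma exists_norm_T_le (b : ℝ) : ∃ K, 0 ≤ K ∧ ∀ s ∈ Set.Icc 0 b, ‖S.T s‖ ≤ K := by
  obtain ⟨M, hM, ω, hbd⟩ := S.expBounded
  refine ⟨M * Real.exp (|ω| * b), mul_nonneg (by linarith) (Real.exp_pos _).le,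
    fun s hs => (hbd s hs.1).trans (mul_le_mul_of_nonneg_left (Real.exp_le_exp.2 ?_) (by linarith))⟩
  exact (mul_le_mul_of_nonneg_right (le_abs_self ω) hs.1).trans
    (mul_le_mul_of_nonneg_left hs.2 (abs_nonneg ω))

lemma norm_apply_T_le {b K : ℝ} (hK : ∀ s ∈ Set.Icc 0 b, ‖S.T s‖ ≤ K) {s : ℝ}
    (hs : s ∈ Set.Icc 0 b) (x : X) : ‖f (S.T s x)‖ ≤ ‖f‖ * K * ‖x‖ := by
  calc ‖f (S.T s x)‖ ≤ ‖f‖ * ‖S.T s x‖ := f.le_opNorm _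
    _ ≤ ‖f‖ * (K * ‖x‖) := by gcongr; exact (S.T s).le_of_opNorm_le (hK s hs) x
    _ = ‖f‖ * K * ‖x‖ := by ring

lemma norm_integral_apply_T_le {b K : ℝ} (hK : ∀ s ∈ Set.Icc 0 b, ‖S.T s‖ ≤ K) {a c : ℝ}
    (ha : 0 ≤ a) (hac : a ≤ c) (hcb : c ≤ b) (x : X) :
    ‖∫ s in a..c, f (S.T s x)‖ ≤ ‖f‖ * K * ‖x‖ * (c - a) := by
  have := intervalIntegral.norm_integral_le_of_norm_le_const fun s hs =>
    S.norm_apply_T_le (f := f) hK (x := x) (s := s) (by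
      rw [Set.uIoc_of_le hac] at hs
      exact ⟨by linarith [hs.1], by linarith [hs.2]⟩)
  rwa [abs_of_nonneg (sub_nonneg.2 hac)] at this

lemma continuousOn_apply_T (hf : f ∈ circDual X τ) (x : X) :
    ContinuousOn (fun s => f (S.T s x)) (Set.Ici 0) := by
  intro s₀ hs₀
  obtain ⟨K, -, hK⟩ := S.exists_norm_T_le (s₀ + 1)
  rw [ContinuousWithinAt, tendsto_iff_seq_tendsto]
  intro u hu
  have hbdd : ∀ᶠ n in atTop, ‖S.T (u n) x‖ ≤ K * ‖x‖ := by
    filter_upwards [hu.eventually eventually_mem_nhdsWithin,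
      (hu.mono_right nhdsWithin_le_nhds).eventually (gt_mem_nhds (lt_add_one s₀))] with n h0 h1
    exact (S.T (u n)).le_of_opNorm_le (hK _ ⟨h0, h1.le⟩) x
  exact tendsto_apply_of_mem_circDual hf hbdd (Tendsto.comp (S.strongCont x s₀ hs₀) hu)

lemma intervalIntegrable_apply_T (hf : f ∈ circDual X τ) (x : X) {a b : ℝ} (ha : 0 ≤ a)
    (hb : 0 ≤ b) : IntervalIntegrable (fun s => f (S.T s x)) volume a b :=
  ((S.continuousOn_apply_T hf x).mono fun _ hs => le_trans (le_inf ha hb) hs.1).intervalIntegrable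

lemma tendsto_T_apply_of_tendsto (hτ : @IsTopologicalAddGroup X τ _) {u : ℕ → X} {x : X}
    (hbdd : ∃ C, ∀ n, ‖u n‖ ≤ C) (hu : Tendsto u atTop (@nhds X τ x)) {s : ℝ} (hs : 0 ≤ s) :
    Tendsto (fun n => S.T s (u n)) atTop (@nhds X τ (S.T s x)) := by
  let := τ
  have h0 : Tendsto (fun n => S.T s (u n - x)) atTop (𝓝 0) := fun U hU =>
    (S.biEquicont u x hbdd hu s hs U hU).mono fun n hn => hn s ⟨hs, le_rfl⟩
  simpa using h0.add_const (S.T s x)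

def cesaroMean (hf : f ∈ circDual X τ) {t : ℝ} (ht : 0 < t) : wDual X :=
  LinearMap.mkContinuousOfExistsBound (E := X) (F := ℂ) (σ := RingHom.id ℂ)
    { toFun := fun x => (t : ℂ)⁻¹ * ∫ s in (0:ℝ)..t, f (S.T s x)
      map_add' := fun x y => by
        simp only [ContinuousLinearMap.map_add]
        rw [intervalIntegral.integral_add (S.intervalIntegrable_apply_T hf x le_rfl ht.le)
          (S.intervalIntegrable_apply_T hf y le_rfl ht.le), mul_add]
      map_smul' := fun c x => by
        simp only [ContinuousLinearMap.map_smul, smul_eq_mul, intervalIntegral.integral_const_mul,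
          RingHom.id_apply]
        ring }
    (by
      obtain ⟨K, -, hK⟩ := S.exists_norm_T_le t
      refine ⟨‖f‖ * K, fun x => ?_⟩
      rw [LinearMap.coe_mk, AddHom.coe_mk, norm_mul, norm_inv, Complex.norm_of_nonneg ht.le]
      calc t⁻¹ * ‖∫ s in (0:ℝ)..t, f (S.T s x)‖ ≤ t⁻¹ * (‖f‖ * K * ‖x‖ * (t - 0)) := by
            gcongr; exact S.norm_integral_apply_T_le hK le_rfl ht.le le_rfl x
        _ = ‖f‖ * K * ‖x‖ := by rw [sub_zero]; field_simp)

@[simp]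
lemma cesaroMean_apply (hf : f ∈ circDual X τ) {t : ℝ} (ht : 0 < t) (x : X) :
    S.cesaroMean hf ht x = (t : ℂ)⁻¹ * ∫ s in (0:ℝ)..t, f (S.T s x) :=
  rfl

lemma cesaroMean_mem_circDual (hτ : @IsTopologicalAddGroup X τ _) (hf : f ∈ circDual X τ)
    {t : ℝ} (ht : 0 < t) : S.cesaroMean hf ht ∈ circDual X τ := by
  rintro u x ⟨C, hC⟩ hu
  obtain ⟨K, hK0, hK⟩ := S.exists_norm_T_le t
  have hbound : ∀ n, ∀ s ∈ Set.uIoc 0 t, ‖f (S.T s (u n))‖ ≤ ‖f‖ * K * C := fun n s hs => by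
    rw [Set.uIoc_of_le ht.le] at hs
    exact (S.norm_apply_T_le hK ⟨hs.1.le, hs.2⟩ (u n)).trans (by gcongr; exact hC n)
  simp only [cesaroMean_apply]
  refine Tendsto.const_mul _ <|
    intervalIntegral.tendsto_integral_filter_of_dominated_convergence (fun _ => ‖f‖ * K * C)
      (Eventually.of_forall fun n => ?_) (Eventually.of_forall fun n => ae_of_all _ (hbound n))
      intervalIntegrable_const (ae_of_all _ fun s hs => ?_)
  · rw [Set.uIoc_of_le ht.le]
    exact ((S.continuousOn_apply_T hf (u n)).mono fun s hs => hs.1.le).aestronglyMeasurable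
      measurableSet_Ioc
  · rw [Set.uIoc_of_le ht.le] at hs
    exact hf _ _ ⟨‖S.T s‖ * C, fun n =>
      ((S.T s).le_opNorm (u n)).trans (mul_le_mul_of_nonneg_left (hC n) (norm_nonneg _))⟩
      (S.tendsto_T_apply_of_tendsto hτ ⟨C, hC⟩ hu hs.1.le)

lemma cesaroMean_comp_T_sub_apply (hf : f ∈ circDual X τ) {t : ℝ} (ht : 0 < t) {r : ℝ}
    (hr : 0 ≤ r) (x : X) :
    (dualComp (S.cesaroMean hf ht) (S.T r) - S.cesaroMean hf ht) x =
      (t : ℂ)⁻¹ * ((∫ s in t..t + r, f (S.T s x)) - ∫ s in (0:ℝ)..r, f (S.T s x)) := by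
  have hshift : (∫ s in (0:ℝ)..t, f (S.T s (S.T r x))) = ∫ s in r..t + r, f (S.T s x) := by
    have := intervalIntegral.integral_comp_add_right (a := 0) (b := t) (fun s => f (S.T s x)) r
    rw [zero_add] at this
    rw [← this]
    refine intervalIntegral.integral_congr fun s hs => ?_
    rw [Set.uIcc_of_le ht.le] at hs
    simp only [S.map_add s hs.1 r hr, opComp, ContinuousLinearMap.comp_apply]
  have hintegrable : ∀ {a b : ℝ}, 0 ≤ a → 0 ≤ b →
      IntervalIntegrable (fun s => f (S.T s x)) volume a b :=
    fun ha hb => S.intervalIntegrable_apply_T hf x ha hb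
  have h₁ := intervalIntegral.integral_add_adjacent_intervals (hintegrable (b := r) le_rfl hr)
    (hintegrable (b := t + r) hr (by linarith))
  have h₂ := intervalIntegral.integral_add_adjacent_intervals (hintegrable (b := t) le_rfl ht.le)
    (hintegrable (b := t + r) ht.le (by linarith))
  simp only [sub_apply, dualComp, ContinuousLinearMap.comp_apply,
    cesaroMean_apply, hshift]
  linear_combination (t : ℂ)⁻¹ * (h₁ - h₂)

lemma exists_norm_cesaroMean_comp_T_sub_le (hf : f ∈ circDual X τ) {t : ℝ} (ht : 0 < t) :
    ∃ C, ∀ r ∈ Set.Icc (0:ℝ) 1,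
      ‖dualComp (S.cesaroMean hf ht) (S.T r) - S.cesaroMean hf ht‖ ≤ C * r := by
  obtain ⟨K, hK0, hK⟩ := S.exists_norm_T_le (t + 1)
  refine ⟨2 * ‖f‖ * K / t, fun r hr => ?_⟩
  refine ContinuousLinearMap.opNorm_le_bound _ (by have := hr.1; positivity) fun x => ?_
  have h₁ := S.norm_integral_apply_T_le (f := f) hK ht.le (le_add_of_nonneg_right hr.1)
    (by linarith [hr.2]) x
  have h₂ := S.norm_integral_apply_T_le (f := f) hK le_rfl hr.1 (by linarith [hr.2]) x
  rw [S.cesaroMean_comp_T_sub_apply hf ht hr.1, norm_mul, norm_inv,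
    Complex.norm_of_nonneg ht.le]
  calc t⁻¹ * ‖(∫ s in t..t + r, f (S.T s x)) - ∫ s in (0:ℝ)..r, f (S.T s x)‖
      ≤ t⁻¹ * (‖f‖ * K * ‖x‖ * (t + r - t) + ‖f‖ * K * ‖x‖ * (r - 0)) := by
        gcongr; exact (norm_sub_le _ _).trans (add_le_add h₁ h₂)
    _ = 2 * ‖f‖ * K / t * r * ‖x‖ := by ring

lemma cesaroMean_mem_sunDual (hτ : @IsTopologicalAddGroup X τ _) (hf : f ∈ circDual X τ)
    {t : ℝ} (ht : 0 < t) : S.cesaroMean hf ht ∈ sunDual S := by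
  refine ⟨S.cesaroMean_mem_circDual hτ hf ht, tendsto_sub_nhds_zero_iff.1 ?_⟩
  obtain ⟨C, hC⟩ := S.exists_norm_cesaroMean_comp_T_sub_le hf ht
  have hlin : Tendsto (fun r : ℝ => C * r) (𝓝[>] 0) (𝓝 0) := by
    simpa using ((continuous_const_mul C).tendsto 0).mono_left nhdsWithin_le_nhds
  refine squeeze_zero_norm' ?_ hlin
  filter_upwards [Ioo_mem_nhdsGT zero_lt_one] with r hr
  exact hC r (Set.Ioo_subset_Icc_self hr)

lemma norm_sub_cesaroMean_apply_le (hf : f ∈ circDual X τ) {t : ℝ} (ht : 0 < t) {y : X} {ε : ℝ}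
    (hy : ∀ r ∈ Set.Ioc 0 t, ‖f (S.T r y) - f y‖ ≤ ε) :
    ‖f y - S.cesaroMean hf ht y‖ ≤ ε := by
  have ht' : (t : ℂ) ≠ 0 := by exact_mod_cast ht.ne'
  have hmean : f y - S.cesaroMean hf ht y = (t : ℂ)⁻¹ * ∫ r in (0:ℝ)..t, (f y - f (S.T r y)) := by
    rw [intervalIntegral.integral_sub intervalIntegrable_const
      (S.intervalIntegrable_apply_T hf y le_rfl ht.le), intervalIntegral.integral_const,
      cesaroMean_apply, sub_zero, Complex.real_smul]
    field_simp
  have hbound : ‖∫ r in (0:ℝ)..t, (f y - f (S.T r y))‖ ≤ ε * t := by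
    have := intervalIntegral.norm_integral_le_of_norm_le_const (C := ε) (a := 0) (b := t)
      (f := fun r => f y - f (S.T r y)) fun r hr => by
        rw [Set.uIoc_of_le ht.le] at hr
        exact norm_sub_rev (f y) _ ▸ hy r hr
    rwa [sub_zero, abs_of_pos ht] at this
  rw [hmean, norm_mul, norm_inv, Complex.norm_of_nonneg ht.le]
  calc t⁻¹ * ‖∫ r in (0:ℝ)..t, (f y - f (S.T r y))‖ ≤ t⁻¹ * (ε * t) := by gcongr
    _ = ε := by field_simp

def IsWeakEquicontinuous (G : Set X) : Prop :=
  ∀ f ∈ circDual X τ, ∀ ε > (0:ℝ), ∃ δ > (0:ℝ),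
    ∀ t ∈ Set.Ico (0:ℝ) δ, ∀ g ∈ G, ‖f (S.T t g) - f g‖ < ε

namespace IsWeakEquicontinuous

variable {S} {G : Set X}

lemma mono (hG : S.IsWeakEquicontinuous G) {H : Set X} (hHG : H ⊆ G) :
    S.IsWeakEquicontinuous H := fun f hf ε hε =>
  let ⟨δ, hδ, h⟩ := hG f hf ε hε
  ⟨δ, hδ, fun t ht g hg => h t ht g (hHG hg)⟩

lemma insert (hG : S.IsWeakEquicontinuous G) (x : X) :
    S.IsWeakEquicontinuous (insert x G) := by
  intro f hf ε hε
  obtain ⟨δ₁, hδ₁, hG⟩ := hG f hf ε hε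
  obtain ⟨δ₂, hδ₂, hx⟩ :=
    Metric.continuousWithinAt_iff.1 (S.continuousOn_apply_T hf x 0 Set.self_mem_Ici) ε hε
  refine ⟨min δ₁ δ₂, lt_min hδ₁ hδ₂, fun t ht y hy => ?_⟩
  rcases hy with rfl | hy
  · have h := hx (x := t) ht.1 (by
      rw [Real.dist_eq, sub_zero, abs_of_nonneg ht.1]
      exact ht.2.trans_le (min_le_right _ _))
    simpa [S.map_zero, dist_eq_norm] using h
  · exact hG t ⟨ht.1, ht.2.trans_le (min_le_left _ _)⟩ y hy

lemma exists_mem_sunDual_norm_sub_lt (hτ : @IsTopologicalAddGroup X τ _)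
    (hG : S.IsWeakEquicontinuous G) (hf : f ∈ circDual X τ) {ε : ℝ} (hε : 0 < ε) :
    ∃ f' ∈ sunDual S, ∀ y ∈ G, ‖f y - f' y‖ < ε := by
  obtain ⟨δ, hδ, hG⟩ := hG f hf (ε / 2) (half_pos hε)
  refine ⟨S.cesaroMean hf (half_pos hδ), S.cesaroMean_mem_sunDual hτ hf _, fun y hy => ?_⟩
  refine (S.norm_sub_cesaroMean_apply_le hf _ fun r hr => ?_).trans_lt (half_lt_self hε)
  exact (hG r ⟨hr.1.le, hr.2.trans_lt (half_lt_self hδ)⟩ y hy).le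

lemma closure_sunDual_subset (hτ : @IsTopologicalAddGroup X τ _)
    (hG : S.IsWeakEquicontinuous G) :
    closure[weakTop (sunDual S)] G ⊆ closure[weakTop (circDual X τ)] G :=
  closure_weakTop_subset_of_forall_exists_norm_sub_lt fun x _ hf _ hε =>
    (hG.insert x).exists_mem_sunDual_norm_sub_lt hτ hf hε

lemma closure_circDual_eq (hτ : @IsTopologicalAddGroup X τ _)
    (hG : S.IsWeakEquicontinuous G) :
    closure[weakTop (circDual X τ)] G = closure[weakTop (sunDual S)] G :=
  (closure.mono (weakTop_anti fun _ hf => hf.1)).antisymm (hG.closure_sunDual_subset hτ)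

end IsWeakEquicontinuous

end BiContinuousSemigroup

theorem closures_coincide_of_weakEquicontinuous_general
    {X : Type*} [NormedAddCommGroup X] [NormedSpace ℂ X]
    (τ : TopologicalSpace X)
    (hstd : StdAssumptions X τ)
    (S : BiContinuousSemigroup X τ)
    (G : Set X)
    (hG : ∀ f ∈ circDual X τ, ∀ ε > (0:ℝ), ∃ δ > (0:ℝ),
      ∀ t ∈ Set.Ico (0:ℝ) δ, ∀ g ∈ G, ‖f (S.T t g) - f g‖ < ε) :
    @closure X (weakTop (circDual X τ)) G = @closure X (weakTop (sunDual S)) G ∧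
    (@IsClosed X (weakTop (circDual X τ)) G → @IsClosed X (weakTop (sunDual S)) G) ∧
    TopologicalSpace.induced ((↑) : G → X) (weakTop (circDual X τ)) =
      TopologicalSpace.induced ((↑) : G → X) (weakTop (sunDual S)) := by
  have hG : S.IsWeakEquicontinuous G := hG
  have hcl : ∀ C ⊆ G, closure[weakTop (circDual X τ)] C = closure[weakTop (sunDual S)] C :=
    fun C hC => (hG.mono hC).closure_circDual_eq hstd.addGroup
  refine ⟨hcl G subset_rfl, fun hclosed => ?_, induced_subtype_val_eq_of_closure_eq hcl⟩
  rw [← @closure_eq_iff_isClosed X (weakTop (sunDual S)), ← hcl G subset_rfl,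
    @IsClosed.closure_eq X (weakTop (circDual X τ)) G hclosed]

theorem closures_coincide_of_weakEquicontinuous
    {X : Type*} [NormedAddCommGroup X] [NormedSpace ℂ X] [CompleteSpace X]
    (τ : TopologicalSpace X)
    (hstd : StdAssumptions X τ) (hdual : DualAssumptions X τ)
    (γ : TopologicalSpace X) (hmix : IsMixedTopology X τ γ) (hmazur : MazurIn X γ)
    (S : BiContinuousSemigroup X τ)
    (G : Set X)
    (hG : ∀ f ∈ circDual X τ, ∀ ε > (0:ℝ), ∃ δ > (0:ℝ),
      ∀ t ∈ Set.Ico (0:ℝ) δ, ∀ g ∈ G, ‖f (S.T t g) - f g‖ < ε) :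
    @closure X (weakTop (circDual X τ)) G = @closure X (weakTop (sunDual S)) G ∧
    (@IsClosed X (weakTop (circDual X τ)) G → @IsClosed X (weakTop (sunDual S)) G) ∧
    TopologicalSpace.induced ((↑) : G → X) (weakTop (circDual X τ)) =
      TopologicalSpace.induced ((↑) : G → X) (weakTop (sunDual S)) :=
  closures_coincide_of_weakEquicontinuous_general τ hstd S G hG

end
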